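/- arXiv:2402.11717 — 4 statements merged into one kernel-verified Lean document; each statement's English description precedes it below -/
import Mathlib

section
/- For positive integers m, n with partitions λ = (λ₁ ≥ … ≥ λₙ ≥ 0) and ν = (ν₁ ≥ … ≥ νₙ ≥ 0), and complex numbers x₁, …, xₘ, the determinant of the n×n matrix with (i,j)-entry ∑_{k=1}^m conj(xₖ)^{λᵢ+n-i} · xₖ^{νⱼ+n-j} equals ∑_{k ∈ C([m],n)} conj(s_λ(x_k)) · s_ν(x_k) · |V(x_k)|², where the sum is over n-element subsets k = {k₁ < … < kₙ} of {1,…,m}, x_k = (x_{k₁},…,x_{kₙ}), s_λ denotes the Schur polynomial in n variables, and V denotes the Vandermonde determinant. -/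
/-!
The matrix is the Gram-type product `Aᴴ B` of the `n × m` alternant matrices
`A_{kj} = x_k^{λ_j+n-j}` and `B_{kj} = x_k^{ν_j+n-j}`, so by the Cauchy–Binet formula its
determinant is `∑_k conj(a_{λ+δ}(x_k)) a_{ν+δ}(x_k)`. Writing `a_{λ+δ} = s_λ V` turns each term
into `conj(s_λ(x_k)) s_ν(x_k) |V(x_k)|²`; when `V(x_k) = 0` two coordinates of `x_k` coincide
and both sides vanish.

Cauchy–Binet itself: expanding `det (A B)` column by column gives
`∑_{p : [n] → [m]} (∏_i B_{p(i),i}) det A_{·,p}`; the non-injective `p` contribute nothing, and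
an injective `p` is uniquely an increasing enumeration of an `n`-subset composed with a
permutation, whose sign is absorbed into `det B` of that subset.
-/

open scoped BigOperators ComplexConjugate

/-- Vandermonde product `V(z) = ∏_{i<j} (z_i − z_j)`. -/
noncomputable def vand {n : ℕ} (z : Fin n → ℂ) : ℂ :=
  ∏ i : Fin n, ∏ j ∈ Finset.Ioi i, (z i - z j)

/-- Schur polynomial `s_λ(z) = det(z_i^{λ_j + n−1−j}) / V(z)` (junk value 0 if `V(z)=0`). -/
noncomputable def schur {n : ℕ} (lam : Fin n → ℕ) (z : Fin n → ℂ) : ℂ :=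
  Matrix.det (Matrix.of fun i j : Fin n => z i ^ (lam j + (n - 1 - (j : ℕ)))) / vand z

/-- The subvector of `x` indexed by an `n`-element subset of `Fin m` (in increasing order). -/
def subvec {m n : ℕ} (x : Fin m → ℂ) (s : {t : Finset (Fin m) // t.card = n}) :
    Fin n → ℂ := fun i => x (s.1.orderEmbOfFin s.2 i)

open Finset Matrix

namespace Matrix

variable {R : Type*} [CommRing R]

theorem det_mul_eq_sum_prod_mul_det_submatrix {n ι : Type*} [Fintype n] [DecidableEq n]
    [Fintype ι] (A : Matrix n ι R) (B : Matrix ι n R) :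
    (A * B).det = ∑ p : n → ι, (∏ i, B (p i) i) * (A.submatrix id p).det := by
  simp only [det_apply', mul_apply, prod_univ_sum, Finset.mul_sum, Fintype.piFinset_univ,
    submatrix_apply, id, prod_mul_distrib]
  rw [Finset.sum_comm]
  refine sum_congr rfl fun p _ => sum_congr rfl fun σ _ => ?_
  ring

variable {ι : Type*} [LinearOrder ι] {n : ℕ}

theorem image_orderEmbOfFin_comp_perm (s : Finset ι) (hs : s.card = n)
    (τ : Equiv.Perm (Fin n)) : univ.image (s.orderEmbOfFin hs ∘ τ) = s := by
  rw [← coe_inj, coe_image, coe_univ, Set.image_univ, Set.range_comp, τ.range_eq_univ,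
    Set.image_univ, range_orderEmbOfFin]

theorem sum_injective_eq_sum_card_eq_sum_perm [Fintype ι] {M : Type*} [AddCommMonoid M]
    (G : (Fin n → ι) → M) :
    ∑ p with Function.Injective p, G p =
      ∑ s : {t : Finset ι // t.card = n}, ∑ τ : Equiv.Perm (Fin n),
        G (s.1.orderEmbOfFin s.2 ∘ τ) := by
  rw [← Fintype.sum_prod_type']
  symm
  refine sum_bij (fun q _ => q.1.1.orderEmbOfFin q.1.2 ∘ q.2) (fun q _ => ?_)
    (fun q _ q' _ h => ?_) (fun p hp => ?_) (fun _ _ => rfl)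
  · simpa using (q.1.1.orderEmbOfFin q.1.2).injective.comp q.2.injective
  · obtain ⟨⟨s, hs⟩, τ⟩ := q
    obtain ⟨⟨s', hs'⟩, τ'⟩ := q'
    obtain rfl : s = s' := by
      simpa only [image_orderEmbOfFin_comp_perm] using congrArg (univ.image ·) h
    obtain rfl : τ = τ' := Equiv.ext fun i => (s.orderEmbOfFin hs).injective (congrFun h i)
    rfl
  · rw [mem_filter_univ] at hp
    let s : {t : Finset ι // t.card = n} :=
      ⟨univ.image p, by rw [card_image_of_injective _ hp, card_univ, Fintype.card_fin]⟩
    let u : Fin n → Fin n := fun i =>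
      (s.1.orderIsoOfFin s.2).symm ⟨p i, mem_image_of_mem p (mem_univ i)⟩
    have hu : s.1.orderEmbOfFin s.2 ∘ u = p := by
      funext i
      simp [u, ← coe_orderIsoOfFin_apply]
    have hu_inj : Function.Injective u := fun a b hab => hp <| by
      simp only [← hu, Function.comp_apply, hab]
    exact ⟨(s, Equiv.ofBijective u (Finite.injective_iff_bijective.1 hu_inj)), mem_univ _, hu⟩

theorem det_mul_eq_sum_det_mul_det [Fintype ι] (A : Matrix (Fin n) ι R)
    (B : Matrix ι (Fin n) R) :
    (A * B).det = ∑ s : {t : Finset ι // t.card = n},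
      (A.submatrix id (s.1.orderEmbOfFin s.2)).det *
        (B.submatrix (s.1.orderEmbOfFin s.2) id).det := by
  have h_inj_of_ne_zero : ∀ p : Fin n → ι, (∏ i, B (p i) i) * (A.submatrix id p).det ≠ 0 →
      Function.Injective p := by
    intro p hp i j hij
    by_contra hne
    exact hp (by rw [det_zero_of_column_eq hne fun k => by simp [hij], mul_zero])
  rw [det_mul_eq_sum_prod_mul_det_submatrix, ← sum_filter_of_ne fun p _ => h_inj_of_ne_zero p,
    sum_injective_eq_sum_card_eq_sum_perm]
  refine sum_congr rfl fun s _ => ?_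
  set e := s.1.orderEmbOfFin s.2
  calc ∑ τ : Equiv.Perm (Fin n), (∏ i, B (e (τ i)) i) * (A.submatrix id (e ∘ τ)).det
      = ∑ τ : Equiv.Perm (Fin n),
          (∏ i, B (e (τ i)) i) * (Equiv.Perm.sign τ * (A.submatrix id e).det) := by
        simp_rw [← det_permute', submatrix_submatrix, Function.comp_id]
    _ = (A.submatrix id e).det * (B.submatrix e id).det := by
        rw [det_apply' (B.submatrix e id), Finset.mul_sum]
        refine sum_congr rfl fun τ _ => ?_
        simp only [submatrix_apply, id]
        ring

end Matrix

/-- For `ι = Fin n` the determinant is the alternant `a_{λ+δ(n)}(z)`. -/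
def alternantMatrix {R ι : Type*} [CommSemiring R] {n : ℕ} (lam : Fin n → ℕ) (z : ι → R) :
    Matrix ι (Fin n) R :=
  Matrix.of fun i j => z i ^ (lam j + (n - 1 - (j : ℕ)))

theorem det_alternantMatrix_eq_zero_of_vand_eq_zero {n : ℕ} (lam : Fin n → ℕ) {z : Fin n → ℂ}
    (h : vand z = 0) : (alternantMatrix lam z).det = 0 := by
  obtain ⟨i, -, hi⟩ := prod_eq_zero_iff.1 h
  obtain ⟨j, hij, hz⟩ := prod_eq_zero_iff.1 hi
  refine det_zero_of_row_eq (mem_Ioi.1 hij).ne (funext fun k => ?_)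
  simp [alternantMatrix, sub_eq_zero.1 hz]

theorem conj_schur_mul_schur_mul_norm_vand_sq {n : ℕ} (lam nu : Fin n → ℕ) (z : Fin n → ℂ) :
    conj (schur lam z) * schur nu z * (‖vand z‖ : ℂ) ^ 2 =
      conj (alternantMatrix lam z).det * (alternantMatrix nu z).det := by
  by_cases hV : vand z = 0
  · simp [hV, det_alternantMatrix_eq_zero_of_vand_eq_zero lam hV]
  · have hV' : conj (vand z) ≠ 0 := (map_ne_zero _).2 hV
    rw [← Complex.conj_mul', schur, schur, map_div₀]
    field_simp
    rfl

theorem det_eq_sum_schur_general (m n : ℕ)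
    (lam nu : Fin n → ℕ) (x : Fin m → ℂ) :
    Matrix.det (Matrix.of fun i j : Fin n =>
        ∑ k : Fin m, conj (x k) ^ (lam i + (n - 1 - (i : ℕ))) * x k ^ (nu j + (n - 1 - (j : ℕ)))) =
      ∑ s : {t : Finset (Fin m) // t.card = n},
        conj (schur lam (subvec x s)) * schur nu (subvec x s) *
          ((‖vand (subvec x s)‖ : ℂ)) ^ 2 := by
  have h_gram : Matrix.of (fun i j : Fin n =>
      ∑ k : Fin m, conj (x k) ^ (lam i + (n - 1 - (i : ℕ))) * x k ^ (nu j + (n - 1 - (j : ℕ)))) =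
      (alternantMatrix lam x)ᴴ * alternantMatrix nu x := by
    ext i j
    simp [alternantMatrix, mul_apply]
  rw [h_gram, det_mul_eq_sum_det_mul_det]
  refine sum_congr rfl fun s _ => ?_
  rw [conj_schur_mul_schur_mul_norm_vand_sq, ← conjTranspose_submatrix, det_conjTranspose]
  rfl

/-- Cauchy–Binet for Schur/Vandermonde sums.
For partitions `λ, ν` with at most `n` parts and `x₁,…,xₘ ∈ ℂ`, the determinant of the
matrix with entries `∑ₖ conj(xₖ)^{λᵢ+n−i} xₖ^{νⱼ+n−j}` equals
`∑_{k ∈ C([m],n)} conj(s_λ(x_k)) s_ν(x_k) |V(x_k)|²`. -/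
theorem det_eq_sum_schur (m n : ℕ) (hm : 0 < m) (hn : 0 < n)
    (lam nu : Fin n → ℕ) (hlam : Antitone lam) (hnu : Antitone nu) (x : Fin m → ℂ) :
    Matrix.det (Matrix.of fun i j : Fin n =>
        ∑ k : Fin m, conj (x k) ^ (lam i + (n - 1 - (i : ℕ))) * x k ^ (nu j + (n - 1 - (j : ℕ)))) =
      ∑ s : {t : Finset (Fin m) // t.card = n},
        conj (schur lam (subvec x s)) * schur nu (subvec x s) *
          ((‖vand (subvec x s)‖ : ℂ)) ^ 2 :=
  det_eq_sum_schur_general m n lam nu x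
end

section
/- Let d₁ > d₂ > … > dₙ ≥ 0 be integers, x₁,…,xₘ ∈ ℂ with m ≥ n, and A ∈ ℂ^{m×n} the matrix with entries A_{k,i} = xₖ^{dᵢ}. Let λ = d − δ(n), i.e. λᵢ = dᵢ + i − n. Then det(A*A) = ∑_{k ∈ C([m],n)} |s_λ(x_k) · V(x_k)|², where A* is the conjugate transpose, the sum is over n-element subsets of {1,…,m}, s_λ is the Schur polynomial in n variables, and V the Vandermonde determinant. -/
open scoped BigOperators ComplexConjugate Matrix

/-!
By Cauchy–Binet, `det (Aᴴ A) = ∑ₛ |det A_s|²` over the maximal minors `A_s = (x_{sᵢ}^{dⱼ})`, and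
since `d` is strictly decreasing each such minor is the bialternant `s_λ(x_s) · V(x_s)`.
-/

open exteriorPower Set.powersetCard in
/-- Cauchy–Binet: expand the wedge of the columns of `A` in the standard basis of `⋀ⁿ (ι → R)`
and pair it with the wedge of the rows of `B`. -/
theorem Matrix.det_mul_eq_sum_powersetCard {R ι : Type*} [CommRing R] [Fintype ι] [LinearOrder ι]
    {n : ℕ} (B : Matrix (Fin n) ι R) (A : Matrix ι (Fin n) R) :
    (B * A).det = ∑ s : Set.powersetCard ι n,
      (B.submatrix id (ofFinEmbEquiv.symm s)).det * (A.submatrix (ofFinEmbEquiv.symm s) id).det := by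
  let b := (Pi.basisFun R ι).exteriorPower n
  let rowsB : Fin n → Module.Dual R (ι → R) := fun i => ∑ k, B i k • LinearMap.proj k
  let colsA : Fin n → ι → R := fun j k => A k j
  have pairing (v : Fin n → ι → R) : pairingDual R _ n (ιMulti R n rowsB) (ιMulti R n v) =
      (Matrix.of fun i j => ∑ k, B j k * v i k).det := by
    simp [rowsB]
  calc (B * A).det = pairingDual R _ n (ιMulti R n rowsB) (ιMulti R n colsA) := by
        rw [pairing, ← det_transpose]; rfl
    _ = ∑ s, b.repr (ιMulti R n colsA) s * pairingDual R _ n (ιMulti R n rowsB) (b s) := by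
        conv_lhs => rw [← b.sum_repr (ιMulti R n colsA)]
        simp only [map_sum, map_smul, smul_eq_mul]
    _ = _ := by
        refine Finset.sum_congr rfl fun s _ => ?_
        rw [basis_repr_apply, ιMultiDual_apply_ιMulti, basis_apply, ιMulti_family, pairing,
          mul_comm, ← det_transpose (A.submatrix _ id), ← det_transpose (B.submatrix _ _)]
        congr 2
        ext
        simp [Pi.single_apply]

theorem Fin.val_le_of_strictMono {n : ℕ} {g : Fin n → ℕ} (hg : StrictMono g) (k : Fin n) :
    (k : ℕ) ≤ g k := by
  obtain ⟨k, hk⟩ := k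
  induction k with
  | zero => exact Nat.zero_le _
  | succ k ih => exact (ih (by omega)).trans_lt (hg (Fin.mk_lt_mk.2 k.lt_succ_self))

theorem schur_mul_vand {n : ℕ} (lam : Fin n → ℕ) (z : Fin n → ℂ) :
    schur lam z * vand z =
      (Matrix.of fun i j : Fin n => z i ^ (lam j + (n - 1 - (j : ℕ)))).det := by
  by_cases h : vand z = 0
  · obtain ⟨i, -, j, hj, hij⟩ : ∃ i ∈ Finset.univ, ∃ j ∈ Finset.Ioi i, z i - z j = 0 := by
      simpa [vand, Finset.prod_eq_zero_iff] using h
    rw [h, mul_zero, eq_comm]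
    exact Matrix.det_zero_of_row_eq (Finset.mem_Ioi.1 hj).ne
      (funext fun _ => by simp [sub_eq_zero.1 hij])
  · exact div_mul_cancel₀ _ h

theorem det_pow_eq_schur_mul_vand {n : ℕ} {d : Fin n → ℕ} (hd : StrictAnti d) (z : Fin n → ℂ) :
    (Matrix.of fun i j : Fin n => z i ^ d j).det =
      schur (fun j => d j - (n - 1 - (j : ℕ))) z * vand z := by
  have hexp (j : Fin n) : d j - (n - 1 - j) + (n - 1 - j) = d j := by
    have := Fin.val_le_of_strictMono (hd.comp Fin.rev_strictAnti) j.rev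
    simp only [Function.comp_apply, Fin.rev_rev, Fin.val_rev] at this
    omega
  simp only [schur_mul_vand, hexp]

theorem det_conjTranspose_mul_self_general (m n : ℕ)
    (d : Fin n → ℕ) (hd : StrictAnti d) (x : Fin m → ℂ)
    (A : Matrix (Fin m) (Fin n) ℂ) (hA : ∀ k i, A k i = x k ^ d i) :
    (Aᴴ * A).det =
      ∑ s : {t : Finset (Fin m) // t.card = n},
        ((‖schur (fun i => d i - (n - 1 - (i : ℕ))) (subvec x s) *
          vand (subvec x s)‖ : ℂ)) ^ 2 := by
  rw [Matrix.det_mul_eq_sum_powersetCard]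
  refine Fintype.sum_equiv (ι := Set.powersetCard (Fin m) n)
    (κ := {t : Finset (Fin m) // t.card = n}) (Equiv.subtypeEquivRight fun _ => Iff.rfl) _ _
    fun ⟨t, ht⟩ => ?_
  have hminor : A.submatrix (t.orderEmbOfFin ht) id =
      Matrix.of fun i j => subvec x ⟨t, ht⟩ i ^ d j := by
    ext i j
    simp [hA, subvec]
  rw [Set.powersetCard.ofFinEmbEquiv_symm_apply, ← Matrix.conjTranspose_submatrix,
    Matrix.det_conjTranspose, hminor, det_pow_eq_schur_mul_vand hd]
  exact Complex.conj_mul' _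

/-- for `d₁ > … > dₙ ≥ 0`, the matrix `A` with `A_{k,i} = xₖ^{dᵢ}` satisfies
`det(A*A) = ∑_{k ∈ C([m],n)} |s_λ(x_k) V(x_k)|²` where `λ = d − δ(n)`. -/
theorem det_conjTranspose_mul_self (m n : ℕ) (hmn : n ≤ m)
    (d : Fin n → ℕ) (hd : StrictAnti d) (x : Fin m → ℂ)
    (A : Matrix (Fin m) (Fin n) ℂ) (hA : ∀ k i, A k i = x k ^ d i) :
    (Aᴴ * A).det =
      ∑ s : {t : Finset (Fin m) // t.card = n},
        ((‖schur (fun i => d i - (n - 1 - (i : ℕ))) (subvec x s) *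
          vand (subvec x s)‖ : ℂ)) ^ 2 :=
  det_conjTranspose_mul_self_general m n d hd x A hA
end

section
/- Let d₁ > d₂ > … > dₙ ≥ 0 be integers, and let x₁,…,xₘ be complex numbers among which there are at least n distinct positive real values. Then the matrix A ∈ ℂ^{m×n} with entries A_{k,i} = xₖ^{dᵢ} is injective; equivalently, A*A is invertible, so the normal equation A*A a = A* y has a unique solution for every y ∈ ℂᵐ. -/
/-! A vector `v` with `A v = 0` has real and imaginary parts that are coefficient vectors of real
polynomials `∑ aᵢ X^{dᵢ}` with at most `n` terms vanishing at `n` distinct positive reals. By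
Descartes' rule of signs a nonzero real polynomial has at most as many positive roots as sign
changes in its coefficients, hence fewer than its number of terms; so `v = 0`. Injectivity of `A`
makes `AᴴA` positive definite, hence invertible. -/

open scoped BigOperators ComplexConjugate Matrix

open Finset

namespace Polynomial

theorem signVariations_lt_card_support {R : Type*} [Semiring R] [LinearOrder R] {P : R[X]}
    (hP : P ≠ 0) : P.signVariations < #P.support := by
  induction hn : #P.support using Nat.strong_induction_on generalizing P with
  | _ n ih =>
  have hsucc : #P.eraseLead.support + 1 = n := hn ▸ card_support_eraseLead_add_one hP
  rw [signVariations_eq_eraseLead_add_ite hP]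
  by_cases h0 : P.eraseLead = 0
  · rw [← hsucc]
    simp [h0, hP]
  · have := ih _ (by omega) h0 rfl
    split_ifs <;> omega

variable {R : Type*} [CommRing R] [LinearOrder R] [IsStrictOrderedRing R]

theorem card_lt_card_support_of_pos_isRoot {P : R[X]} (hP : P ≠ 0) {S : Finset R}
    (hS : ∀ r ∈ S, 0 < r ∧ P.IsRoot r) : #S < #P.support :=
  calc #S = S.val.countP (0 < ·) := (Multiset.countP_eq_card.mpr fun r hr => (hS r hr).1).symm
    _ ≤ P.roots.countP (0 < ·) := Multiset.countP_le_of_le _ <|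
      (Multiset.le_iff_subset S.nodup).mpr fun r hr => (mem_roots hP).mpr (hS r hr).2
    _ ≤ P.signVariations := roots_countP_pos_le_signVariations P
    _ < #P.support := signVariations_lt_card_support hP

end Polynomial

open Polynomial in
theorem eq_zero_of_sum_mul_pow_eq_zero {R ι : Type*} [CommRing R] [LinearOrder R]
    [IsStrictOrderedRing R] [Fintype ι] {d : ι → ℕ} (hd : Function.Injective d) {S : Finset R}
    (hS : Fintype.card ι ≤ #S) (hS_pos : ∀ r ∈ S, 0 < r) {a : ι → R}
    (ha : ∀ r ∈ S, ∑ i, a i * r ^ d i = 0) : a = 0 := by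
  classical
  set P : R[X] := ∑ i, monomial (d i) (a i)
  have hcoeff : ∀ i, P.coeff (d i) = a i := fun i => by
    simp [P, coeff_monomial, hd.eq_iff]
  have hsupp : P.support ⊆ univ.image d := fun j hj => by
    by_contra hj'
    simp_all [P, coeff_monomial]
  by_contra ha0
  have hP : P ≠ 0 := fun hP => ha0 <| funext fun i => by simp [← hcoeff i, hP]
  refine (card_lt_card_support_of_pos_isRoot hP (S := S) fun r hr =>
    ⟨hS_pos r hr, by simpa [P, eval_finsetSum] using ha r hr⟩).not_ge ?_
  calc #P.support ≤ #(univ.image d) := card_le_card hsupp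
    _ ≤ Fintype.card ι := card_image_le
    _ ≤ #S := hS

theorem Complex.eq_zero_of_sum_ofReal_pow_mul_eq_zero {ι : Type*} [Fintype ι] {d : ι → ℕ}
    (hd : Function.Injective d) {S : Finset ℝ} (hS : Fintype.card ι ≤ #S)
    (hS_pos : ∀ r ∈ S, 0 < r) {v : ι → ℂ} (hv : ∀ r ∈ S, ∑ i, (r : ℂ) ^ d i * v i = 0) :
    v = 0 := by
  have hre := eq_zero_of_sum_mul_pow_eq_zero hd hS hS_pos (a := fun i => (v i).re) fun r hr => by
    simpa [← Complex.ofReal_pow, mul_comm] using congrArg Complex.re (hv r hr)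
  have him := eq_zero_of_sum_mul_pow_eq_zero hd hS hS_pos (a := fun i => (v i).im) fun r hr => by
    simpa [← Complex.ofReal_pow, mul_comm] using congrArg Complex.im (hv r hr)
  exact funext fun i => Complex.ext (congrFun hre i) (congrFun him i)

/-- if among `x₁,…,xₘ` there are at least `n` distinct positive real values,
then the matrix `A` with `A_{k,i} = xₖ^{dᵢ}` is injective, `A*A` is invertible, and the
normal equation `A*A a = A* y` has a unique solution for every `y`. -/
theorem normal_equation_unique_solution (m n : ℕ) (d : Fin n → ℕ) (hd : StrictAnti d)
    (x : Fin m → ℂ)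
    (hx : ∃ s : Finset (Fin m), s.card = n ∧ (∀ k ∈ s, ∃ r : ℝ, 0 < r ∧ x k = r) ∧
      Set.InjOn x s)
    (A : Matrix (Fin m) (Fin n) ℂ) (hA : ∀ k i, A k i = x k ^ d i) :
    Function.Injective A.mulVec ∧ IsUnit (Aᴴ * A) ∧
      ∀ y : Fin m → ℂ, ∃! a : Fin n → ℂ, (Aᴴ * A).mulVec a = Aᴴ.mulVec y := by
  obtain ⟨s, hs_card, hs_real, hs_inj⟩ := hx
  choose! r hr_pos hr using hs_real
  have hr_inj : Set.InjOn r s := fun k hk l hl hkl => hs_inj hk hl (by rw [hr k hk, hr l hl, hkl])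
  have hA_inj : Function.Injective A.mulVec := by
    refine (injective_iff_map_eq_zero A.mulVecLin).mpr fun v hv => ?_
    refine Complex.eq_zero_of_sum_ofReal_pow_mul_eq_zero hd.injective (S := s.image r)
      (by rw [card_image_of_injOn hr_inj, hs_card, Fintype.card_fin])
      (by simpa using hr_pos) fun t ht => ?_
    obtain ⟨k, hk, rfl⟩ := mem_image.mp ht
    simpa [Matrix.mulVec, dotProduct, hA, hr k hk] using congrFun hv k
  have hAA : IsUnit (Aᴴ * A) :=
    open scoped ComplexOrder in (Matrix.PosDef.conjTranspose_mul_self A hA_inj).isUnit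
  refine ⟨hA_inj, hAA, fun y => (Function.bijective_iff_existsUnique _).mp ?_ _⟩
  exact ⟨Matrix.mulVec_injective_iff_isUnit.mpr hAA, Matrix.mulVec_surjective_iff_isUnit.mpr hAA⟩
end

section
/- Let A ∈ ℂ^{m×n} be injective with entries A_{k,i} = xₖ^{dᵢ}, and define B ∈ ℂ^{n×C(m,n−1)} by B_{i,l} = (−1)^i s_{λ[i]}(x_l) V(x_l) / sqrt(∑_{k ∈ C([m],n)} |s_λ(x_k) V(x_k)|²) for l ∈ C([m],n−1). Then the Moore–Penrose pseudoinverse of A satisfies A⁺ = (A*A)^{−1}A* = B B* A* = B (A B)*. -/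
/-!
By Cauchy–Binet, `det (Aᴴ A) = ∑ₛ |det Aₛ|²` over the maximal square row-submatrices `Aₛ`
of `A`, and each cofactor of `Aᴴ A` is likewise a sum over `(n-1)`-row subsets of products of
minors of `A` with one column deleted; this says exactly that `adj (Aᴴ A) = C Cᴴ` for the matrix
`C` of signed column-deleted minors. The bialternant formula `s_μ V = det (x_i ^ (μ_j + n-1-j))`
identifies these minors of the Vandermonde-type matrix `A` with the products `s_μ V` in `B`, so
`B = C / √(det (Aᴴ A))` and `B Bᴴ = adj (Aᴴ A) / det (Aᴴ A) = (Aᴴ A)⁻¹`.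
-/

open scoped BigOperators ComplexConjugate Matrix

namespace Finset

theorem sum_injective_eq_sum_orderEmbOfFin {ι M : Type*} [Fintype ι] [LinearOrder ι]
    [AddCommMonoid M] {n : ℕ} (F : (Fin n → ι) → M) :
    ∑ p ∈ univ.filter (fun p : Fin n → ι => Function.Injective p), F p
      = ∑ s : {t : Finset ι // t.card = n},
          ∑ q ∈ univ.filter (fun q : Fin n → Fin n => Function.Injective q),
            F (s.1.orderEmbOfFin s.2 ∘ q) := by
  have image_eq {s : {t : Finset ι // t.card = n}} {q : Fin n → Fin n}
      (hq : Function.Injective q) : univ.image (s.1.orderEmbOfFin s.2 ∘ q) = s.1 := by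
    rw [← image_image, image_univ_of_surjective (Finite.surjective_of_injective hq),
      image_orderEmbOfFin_univ]
  rw [← sum_product']
  refine (sum_bij (fun sq _ => sq.1.1.orderEmbOfFin sq.1.2 ∘ sq.2) ?_ ?_ ?_ ?_).symm
  · rintro ⟨s, q⟩ hq
    simp only [mem_product, mem_filter, mem_univ, true_and] at hq ⊢
    exact (s.1.orderEmbOfFin s.2).injective.comp hq
  · rintro ⟨s, q⟩ hq ⟨s', q'⟩ hq' h
    simp only [mem_product, mem_filter, mem_univ, true_and] at hq hq'
    replace h : s.1.orderEmbOfFin s.2 ∘ q = s'.1.orderEmbOfFin s'.2 ∘ q' := h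
    obtain rfl : s = s' := Subtype.ext <|
      (image_eq hq).symm.trans ((congrArg (univ.image ·) h).trans (image_eq hq'))
    obtain rfl : q = q' := funext fun i => (s.1.orderEmbOfFin s.2).injective (congrFun h i)
    rfl
  · intro p hp
    simp only [mem_filter, mem_univ, true_and] at hp
    have hcard : (univ.image p).card = n := by
      rw [card_image_of_injective _ hp, card_univ, Fintype.card_fin]
    set e := (univ.image p).orderIsoOfFin hcard
    have hmem (i : Fin n) : p i ∈ univ.image p := mem_image_of_mem p (mem_univ i)
    refine ⟨(⟨_, hcard⟩, fun i => e.symm ⟨p i, hmem i⟩), ?_, funext fun i => ?_⟩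
    · simp only [mem_product, mem_filter, mem_univ, true_and]
      exact fun a b hab => hp (congrArg Subtype.val (e.symm.injective hab))
    · simp [e, ← coe_orderIsoOfFin_apply]
  · exact fun _ _ => rfl

end Finset

namespace Matrix

open Finset Equiv

variable {R : Type*} [CommRing R] {ι : Type*} {n : ℕ}

theorem sum_sign_mul_prod_eq_zero_of_not_injective (M : Matrix (Fin n) ι R)
    (N : Matrix ι (Fin n) R) {p : Fin n → ι} (hp : ¬Function.Injective p) :
    ∑ σ : Perm (Fin n), (Perm.sign σ : R) * ∏ k, M (σ k) (p k) * N (p k) k = 0 := by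
  obtain ⟨i, j, hpij, hij⟩ : ∃ i j, p i = p j ∧ i ≠ j := by
    simpa [Function.Injective] using hp
  -- precomposing with the transposition of `i` and `j` flips the sign and fixes the product
  refine sum_involution (fun σ _ => σ * Equiv.swap i j) (fun σ _ => ?_)
    (fun σ _ _ => (not_congr mul_swap_eq_iff).mpr hij) (fun _ _ => mem_univ _)
    fun σ _ => mul_swap_involutive i j σ
  have : ∏ k, M (σ k) (p k) = ∏ k, M ((σ * Equiv.swap i j) k) (p k) :=
    Fintype.prod_equiv (Equiv.swap i j) _ _ (by simp [apply_swap_eq_self hpij])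
  simp [this, Perm.sign_swap hij, prod_mul_distrib]

theorem det_mul_eq_sum_injective [Fintype ι] [DecidableEq ι] (M : Matrix (Fin n) ι R)
    (N : Matrix ι (Fin n) R) :
    (M * N).det = ∑ p ∈ univ.filter (fun p : Fin n → ι => Function.Injective p),
      ∑ σ : Perm (Fin n), (Perm.sign σ : R) * ∏ k, M (σ k) (p k) * N (p k) k := by
  have hall : (M * N).det = ∑ p : Fin n → ι,
      ∑ σ : Perm (Fin n), (Perm.sign σ : R) * ∏ k, M (σ k) (p k) * N (p k) k := by
    simp only [det_apply', mul_apply, prod_univ_sum, mul_sum, Fintype.piFinset_univ]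
    exact sum_comm
  rw [hall]
  refine (sum_subset (filter_subset _ _) fun p _ hp => ?_).symm
  exact sum_sign_mul_prod_eq_zero_of_not_injective M N (by simpa using hp)

/-- The Cauchy–Binet formula. -/
theorem det_mul_eq_sum_det_submatrix [Fintype ι] [LinearOrder ι] (M : Matrix (Fin n) ι R)
    (N : Matrix ι (Fin n) R) :
    (M * N).det = ∑ s : {t : Finset ι // t.card = n},
      (M.submatrix id (s.1.orderEmbOfFin s.2)).det *
        (N.submatrix (s.1.orderEmbOfFin s.2) id).det := by
  rw [det_mul_eq_sum_injective, sum_injective_eq_sum_orderEmbOfFin]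
  refine sum_congr rfl fun s _ => ?_
  -- the inner sum is the same expansion of the determinant of the `n × n` product
  rw [← det_mul, det_mul_eq_sum_injective]
  rfl

section Gram

variable [StarRing R] [Fintype ι] [LinearOrder ι]

theorem det_conjTranspose_mul_self (A : Matrix ι (Fin n) R) :
    (Aᴴ * A).det = ∑ s : {t : Finset ι // t.card = n},
      star (A.submatrix (s.1.orderEmbOfFin s.2) id).det *
        (A.submatrix (s.1.orderEmbOfFin s.2) id).det := by
  simp only [det_mul_eq_sum_det_submatrix, ← conjTranspose_submatrix, det_conjTranspose]

theorem adjugate_conjTranspose_mul_self_apply (A : Matrix ι (Fin (n + 1)) R)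
    (i j : Fin (n + 1)) :
    (Aᴴ * A).adjugate i j = (-1) ^ (j + i : ℕ) * ∑ l : {t : Finset ι // t.card = n},
      star (A.submatrix (l.1.orderEmbOfFin l.2) j.succAbove).det *
        (A.submatrix (l.1.orderEmbOfFin l.2) i.succAbove).det := by
  rw [adjugate_fin_succ_eq_det_submatrix, submatrix_mul _ _ _ id _ Function.bijective_id,
    det_mul_eq_sum_det_submatrix]
  simp only [submatrix_submatrix, Function.comp_id, Function.id_comp, ← conjTranspose_submatrix,
    det_conjTranspose]

-- Up to the normalising factor, this is the matrix `B` of the theorem.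
def columnDeletedMinors (A : Matrix ι (Fin (n + 1)) R) :
    Matrix (Fin (n + 1)) {t : Finset ι // t.card = n} R :=
  of fun i l => (-1) ^ (i + 1 : ℕ) * (A.submatrix (l.1.orderEmbOfFin l.2) i.succAbove).det

theorem columnDeletedMinors_mul_conjTranspose (A : Matrix ι (Fin (n + 1)) R) :
    columnDeletedMinors A * (columnDeletedMinors A)ᴴ = (Aᴴ * A).adjugate := by
  ext i j
  rw [adjugate_conjTranspose_mul_self_apply, mul_apply, mul_sum]
  refine sum_congr rfl fun l _ => ?_
  simp only [columnDeletedMinors, conjTranspose_apply, of_apply, star_mul', star_pow, star_neg,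
    star_one]
  ring

end Gram

theorem inv_conjTranspose_mul_self [Fintype ι] [LinearOrder ι] (A : Matrix ι (Fin (n + 1)) ℂ) :
    (Aᴴ * A)⁻¹ = ((∑ s : {t : Finset ι // t.card = n + 1},
        ‖(A.submatrix (s.1.orderEmbOfFin s.2) id).det‖ ^ 2 : ℝ) : ℂ)⁻¹ •
      (columnDeletedMinors A * (columnDeletedMinors A)ᴴ) := by
  rw [columnDeletedMinors_mul_conjTranspose, inv_def, Ring.inverse_eq_inv,
    det_conjTranspose_mul_self]
  push_cast
  simp only [Complex.star_def, Complex.conj_mul']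

end Matrix

theorem Fin.sub_le_of_strictAnti {n : ℕ} {d : Fin (n + 1) → ℕ} (hd : StrictAnti d)
    (j : Fin (n + 1)) : n - j ≤ d j := by
  induction j using Fin.reverseInduction with
  | last => simp
  | cast j ih =>
    have : d j.succ < d j.castSucc := hd Fin.castSucc_lt_succ
    simp only [Fin.val_succ, Fin.val_castSucc] at ih ⊢
    omega

theorem Fin.val_succAbove_le {n : ℕ} (i : Fin (n + 1)) (r : Fin n) :
    (i.succAbove r : ℕ) ≤ r + 1 := by
  rw [Fin.succAbove]
  split <;> simp

theorem schur_mul_vand_subvec {m n k : ℕ} {x : Fin m → ℂ} {d : Fin k → ℕ}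
    {A : Matrix (Fin m) (Fin k) ℂ} (hA : ∀ a b, A a b = x a ^ d b) {lam : Fin n → ℕ}
    {e : Fin n → Fin k} (he : ∀ j, lam j + (n - 1 - j) = d (e j))
    (s : {t : Finset (Fin m) // t.card = n}) :
    schur lam (subvec x s) * vand (subvec x s) = (A.submatrix (s.1.orderEmbOfFin s.2) e).det := by
  rw [schur_mul_vand]
  congr 1
  ext a b
  simp [subvec, hA, he]

open Matrix in
/-- The paper's row index `i` is 1-based, hence the sign `(−1)^{i+1}` for `i : Fin (N + 1)`. -/
theorem pseudoinverse_eq_general (m N : ℕ)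
    (d : Fin (N + 1) → ℕ) (hd : StrictAnti d) (x : Fin m → ℂ)
    (A : Matrix (Fin m) (Fin (N + 1)) ℂ) (hA : ∀ k i, A k i = x k ^ d i)
    (B : Matrix (Fin (N + 1)) {t : Finset (Fin m) // t.card = N} ℂ)
    (hB : ∀ i l, B i l = (-1 : ℂ) ^ ((i : ℕ) + 1) *
        schur (fun r : Fin N => d (i.succAbove r) - (N - 1 - (r : ℕ))) (subvec x l) *
        vand (subvec x l) /
        (Real.sqrt (∑ s : {t : Finset (Fin m) // t.card = N + 1},
          (‖schur (fun r : Fin (N + 1) => d r - (N - (r : ℕ))) (subvec x s) *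
            vand (subvec x s)‖) ^ 2) : ℂ)) :
    (Aᴴ * A)⁻¹ * Aᴴ = B * Bᴴ * Aᴴ ∧ (Aᴴ * A)⁻¹ * Aᴴ = B * (A * B)ᴴ := by
  set D := ∑ s : {t : Finset (Fin m) // t.card = N + 1},
    ‖schur (fun r : Fin (N + 1) => d r - (N - (r : ℕ))) (subvec x s) * vand (subvec x s)‖ ^ 2
  have hD : D = ∑ s : {t : Finset (Fin m) // t.card = N + 1},
      ‖(A.submatrix (s.1.orderEmbOfFin s.2) id).det‖ ^ 2 := by
    refine Finset.sum_congr rfl fun s _ => ?_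
    rw [schur_mul_vand_subvec hA fun j => ?_]
    have := Fin.sub_le_of_strictAnti hd j
    simp only [id, add_tsub_cancel_right]
    omega
  have hB' : B = ((√D : ℂ))⁻¹ • columnDeletedMinors A := by
    ext i l
    rw [hB, mul_assoc, schur_mul_vand_subvec hA (e := i.succAbove) fun r => ?_]
    · simp [columnDeletedMinors, div_eq_inv_mul]
    have := Fin.sub_le_of_strictAnti hd (i.succAbove r)
    have := Fin.val_succAbove_le i r
    omega
  have hBB : B * Bᴴ = (Aᴴ * A)⁻¹ := by
    have hsqrt : (√D : ℂ) * √D = D := by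
      rw [← Complex.ofReal_mul, Real.mul_self_sqrt (by positivity)]
    rw [inv_conjTranspose_mul_self, ← hD, ← hsqrt, hB', conjTranspose_smul, Matrix.smul_mul,
      Matrix.mul_smul, smul_smul]
    simp
  exact ⟨by rw [hBB], by rw [conjTranspose_mul, ← Matrix.mul_assoc, hBB]⟩

/-- with `B` defined by `B_{i,l} = (−1)^i s_{λ[i]}(x_l) V(x_l) / sqrt(∑|s_λ V|²)`
(columns indexed by `C([m], n−1)`, `n = N+1`; the paper's `i` is 1-based, hence the sign
`(−1)^{i+1}` for 0-based `i`), the Moore–Penrose pseudoinverse of the injective matrix `A`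
satisfies `A⁺ = (A*A)⁻¹A* = B B* A* = B (A B)*`. -/
theorem pseudoinverse_eq (m N : ℕ) (hmn : N + 1 ≤ m)
    (d : Fin (N + 1) → ℕ) (hd : StrictAnti d) (x : Fin m → ℂ)
    (A : Matrix (Fin m) (Fin (N + 1)) ℂ) (hA : ∀ k i, A k i = x k ^ d i)
    (hinj : Function.Injective A.mulVec)
    (B : Matrix (Fin (N + 1)) {t : Finset (Fin m) // t.card = N} ℂ)
    (hB : ∀ i l, B i l = (-1 : ℂ) ^ ((i : ℕ) + 1) *
        schur (fun r : Fin N => d (i.succAbove r) - (N - 1 - (r : ℕ))) (subvec x l) *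
        vand (subvec x l) /
        (Real.sqrt (∑ s : {t : Finset (Fin m) // t.card = N + 1},
          (‖schur (fun r : Fin (N + 1) => d r - (N - (r : ℕ))) (subvec x s) *
            vand (subvec x s)‖) ^ 2) : ℂ)) :
    (Aᴴ * A)⁻¹ * Aᴴ = B * Bᴴ * Aᴴ ∧ (Aᴴ * A)⁻¹ * Aᴴ = B * (A * B)ᴴ :=
  pseudoinverse_eq_general m N d hd x A hA B hB
end
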